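/- arXiv:1707.06284 — 5 statements merged into one kernel-verified Lean document; each statement's English description precedes it below -/
import Mathlib

section
/- Let (X,B,μ,T) be an invertible measure-preserving system, let P be a sub-σ-algebra of B with T⁻¹P ⊆ P, let f ∈ L²(μ), let m, n be positive integers, and set g = E(f | T^m P) and h = E(g | T^{−n} P). If a_i, a_j are nonnegative integers with a_j − m ≥ n + a_i, then ∫ (g∘T^{a_i})·(g∘T^{a_j}) dμ = ∫ (h∘T^{a_i})·(g∘T^{a_j}) dμ and ∫ (h∘T^{a_i})·(h∘T^{a_j}) dμ = ∫ (g∘T^{a_i})·(h∘T^{a_j}) dμ. -/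
/-!
Put `A = T^{-(n + a_i)} P`. Conditional expectation commutes with the measure-preserving map
`T^{a_i}`, so `h ∘ T^{a_i} = E(g ∘ T^{a_i} | A)`. Since `T⁻¹P ⊆ P`, the σ-algebras `T^{-k} P`
decrease in `k`; `g ∘ T^{a_j}` is `T^{-(a_j - m)} P`-measurable and `h ∘ T^{a_j}` is
`T^{-(n + a_j)} P`-measurable, so both are `A`-measurable when `a_j - m ≥ n + a_i`. Against an
`A`-measurable factor, `g ∘ T^{a_i}` may be replaced by its conditional expectation given `A`
without changing the integral.
-/

open MeasureTheory

namespace MeasureTheory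

section

variable {α β E : Type*} {m : MeasurableSpace β} [mα : MeasurableSpace α] [mβ : MeasurableSpace β]
  [NormedAddCommGroup E] [NormedSpace ℝ E] [CompleteSpace E]

theorem MeasurePreserving.condExp_comp {μ : Measure α} {ν : Measure β} [IsFiniteMeasure μ]
    {S : α → β} (hS : MeasurePreserving S μ ν) (hSe : MeasurableEmbedding S)
    (hm : m ≤ mβ) {u : β → E} (hu : Integrable u ν) :
    ν[u|m] ∘ S =ᵐ[μ] μ[u ∘ S | m.comap S] := by
  have : IsFiniteMeasure ν := hS.map_eq ▸ inferInstance
  have hmS : m.comap S ≤ mα := (MeasurableSpace.comap_mono hm).trans hS.measurable.comap_le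
  refine ae_eq_condExp_of_forall_setIntegral_eq hmS (hS.integrable_comp_emb hSe |>.mpr hu)
    (fun s _ _ => (hS.integrable_comp_emb hSe |>.mpr integrable_condExp).integrableOn) ?_
    (stronglyMeasurable_condExp.comp_measurable (comap_measurable S)).aestronglyMeasurable
  rintro s ⟨t, ht, rfl⟩ -
  calc ∫ x in S ⁻¹' t, (ν[u|m] ∘ S) x ∂μ = ∫ y in t, ν[u|m] y ∂ν :=
        hS.setIntegral_preimage_emb hSe _ t
    _ = ∫ y in t, u y ∂ν := setIntegral_condExp hm hu ht
    _ = ∫ x in S ⁻¹' t, (u ∘ S) x ∂μ := (hS.setIntegral_preimage_emb hSe _ t).symm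

end

variable {α : Type*} {m : MeasurableSpace α} [mα : MeasurableSpace α]

theorem integral_condExp_mul_of_aestronglyMeasurable {μ : Measure α}
    (hm : m ≤ mα) [SigmaFinite (μ.trim hm)] {u φ : α → ℝ} (hφ : AEStronglyMeasurable[m] φ μ)
    (hu : Integrable u μ) (huφ : Integrable (u * φ) μ) :
    ∫ x, μ[u|m] x * φ x ∂μ = ∫ x, u x * φ x ∂μ :=
  calc ∫ x, μ[u|m] x * φ x ∂μ = ∫ x, μ[u * φ|m] x ∂μ :=
        integral_congr_ae (condExp_mul_of_aestronglyMeasurable_right hφ huφ hu).symm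
    _ = ∫ x, u x * φ x ∂μ := integral_condExp hm

end MeasureTheory

theorem MeasurableEmbedding.iterate {α : Type*} [MeasurableSpace α] {f : α → α}
    (hf : MeasurableEmbedding f) (k : ℕ) : MeasurableEmbedding f^[k] := by
  induction k with
  | zero => exact MeasurableEmbedding.id
  | succ k ih => rw [Function.iterate_succ]; exact ih.comp hf

theorem Function.LeftInverse.iterate_comp_iterate_add {α : Type*} {f g : α → α}
    (h : Function.LeftInverse g f) (m k : ℕ) : g^[m] ∘ f^[m + k] = f^[k] := by
  rw [Function.iterate_add, ← Function.comp_assoc, (h.iterate m).comp_eq_id, Function.id_comp]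

namespace MeasurableSpace

variable {α : Type*} {P : MeasurableSpace α} {T : α → α}

theorem comap_iterate_add (P : MeasurableSpace α) (T : α → α) (k a : ℕ) :
    (P.comap T^[k]).comap T^[a] = P.comap T^[k + a] := by
  rw [comap_comp, Function.iterate_add]

theorem comap_iterate_antitone (hTP : P.comap T ≤ P) : Antitone fun k => P.comap T^[k] := by
  refine antitone_nat_of_succ_le fun k => ?_
  rw [add_comm, ← comap_iterate_add, Function.iterate_one]
  exact comap_mono hTP

theorem comap_iterate_le (hTP : P.comap T ≤ P) (k : ℕ) : P.comap T^[k] ≤ P := by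
  simpa [comap_id] using comap_iterate_antitone hTP (Nat.zero_le k)

end MeasurableSpace

namespace MeasureTheory.StronglyMeasurable

variable {α γ : Type*} [TopologicalSpace γ] {P : MeasurableSpace α} {u : α → γ}

theorem comp_iterate_of_comap {T : α → α} {k : ℕ} (hu : StronglyMeasurable[P.comap T^[k]] u)
    (a : ℕ) : StronglyMeasurable[P.comap T^[k + a]] (u ∘ T^[a]) := by
  have := hu.comp_measurable (comap_measurable T^[a])
  rwa [MeasurableSpace.comap_iterate_add] at this

theorem comp_iterate_of_comap_leftInverse {f g : α → α} (hgf : Function.LeftInverse g f) {m : ℕ}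
    (hu : StronglyMeasurable[P.comap g^[m]] u) (d : ℕ) :
    StronglyMeasurable[P.comap f^[d]] (u ∘ f^[m + d]) := by
  have := hu.comp_measurable (comap_measurable f^[m + d])
  rwa [MeasurableSpace.comap_comp, hgf.iterate_comp_iterate_add] at this

end MeasureTheory.StronglyMeasurable

open MeasurableSpace

theorem condexp_iterate_product_integrals_claim1_general
    {X : Type*} (P : MeasurableSpace X) [m0 : MeasurableSpace X]
    (μ : Measure X) [IsProbabilityMeasure μ]
    (T : X ≃ᵐ X) (hT : MeasurePreserving (⇑T) μ μ)
    (hPm : P ≤ m0) (hTP : MeasurableSpace.comap (⇑T) P ≤ P)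
    (f : X → ℝ) (hf : MemLp f 2 μ)
    (m n : ℕ)
    (g h : X → ℝ)
    (hg : g = μ[f| MeasurableSpace.comap ((⇑T.symm)^[m]) P])
    (hh : h = μ[g| MeasurableSpace.comap ((⇑T)^[n]) P])
    (ai aj : ℕ) (hij : n + ai + m ≤ aj) :
    (∫ x, g ((⇑T)^[ai] x) * g ((⇑T)^[aj] x) ∂μ
      = ∫ x, h ((⇑T)^[ai] x) * g ((⇑T)^[aj] x) ∂μ) ∧
    (∫ x, h ((⇑T)^[ai] x) * h ((⇑T)^[aj] x) ∂μ
      = ∫ x, g ((⇑T)^[ai] x) * h ((⇑T)^[aj] x) ∂μ) := by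
  obtain ⟨d, rfl⟩ := Nat.exists_eq_add_of_le (le_of_add_le_right hij)
  have hA : P.comap T^[n + ai] ≤ m0 := (comap_iterate_le hTP _).trans hPm
  have hgL2 : MemLp g 2 μ := hg ▸ hf.condExp one_le_two
  have hhL2 : MemLp h 2 μ := hh ▸ hgL2.condExp one_le_two
  have h_condExp : h ∘ T^[ai] =ᵐ[μ] μ[g ∘ T^[ai] | P.comap T^[n + ai]] := by
    rw [hh, ← comap_iterate_add]
    exact (hT.iterate ai).condExp_comp (T.measurableEmbedding.iterate ai)
      ((comap_iterate_le hTP n).trans hPm) (hgL2.integrable one_le_two)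
  have h_transfer : ∀ φ : X → ℝ, StronglyMeasurable[P.comap T^[n + ai]] φ → MemLp φ 2 μ →
      ∫ x, g (T^[ai] x) * φ x ∂μ = ∫ x, h (T^[ai] x) * φ x ∂μ := by
    intro φ hφ hφL2
    have hgi : MemLp (g ∘ T^[ai]) 2 μ := hgL2.comp_measurePreserving (hT.iterate ai)
    calc ∫ x, g (T^[ai] x) * φ x ∂μ = ∫ x, μ[g ∘ T^[ai] | P.comap T^[n + ai]] x * φ x ∂μ :=
          (integral_condExp_mul_of_aestronglyMeasurable hA hφ.aestronglyMeasurable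
            (hgi.integrable one_le_two) (hgi.integrable_mul hφL2)).symm
      _ = ∫ x, h (T^[ai] x) * φ x ∂μ :=
          integral_congr_ae (h_condExp.mono fun x hx => by simp only [← hx, Function.comp_apply])
  refine ⟨h_transfer _ ?_ (hgL2.comp_measurePreserving (hT.iterate _)),
    (h_transfer _ ?_ (hhL2.comp_measurePreserving (hT.iterate _))).symm⟩
  · exact ((hg ▸ stronglyMeasurable_condExp).comp_iterate_of_comap_leftInverse
      T.symm_apply_apply d).mono (comap_iterate_antitone hTP (by omega))
  · exact ((hh ▸ stronglyMeasurable_condExp).comp_iterate_of_comap (m + d)).mono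
      (comap_iterate_antitone hTP (by omega))

/-- Claim 1 in the proof of Theorem 3.2 of the paper: with `g = E(f | T^m P)` and
`h = E(g | T^{-n} P)`, if `a_j - m ≥ n + a_i` then
`∫ g∘T^{a_i} · g∘T^{a_j} dμ = ∫ h∘T^{a_i} · g∘T^{a_j} dμ` and
`∫ h∘T^{a_i} · h∘T^{a_j} dμ = ∫ g∘T^{a_i} · h∘T^{a_j} dμ`.
Here `T^m P = {T^m A : A ∈ P}` is realized as `MeasurableSpace.comap (T.symm)^[m] P`
and `T^{-n} P = MeasurableSpace.comap T^[n] P`. -/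
theorem condexp_iterate_product_integrals_claim1
    {X : Type*} (P : MeasurableSpace X) [m0 : MeasurableSpace X]
    (μ : Measure X) [IsProbabilityMeasure μ]
    (T : X ≃ᵐ X) (hT : MeasurePreserving (⇑T) μ μ)
    (hPm : P ≤ m0) (hTP : MeasurableSpace.comap (⇑T) P ≤ P)
    (f : X → ℝ) (hf : MemLp f 2 μ)
    (m n : ℕ) (hm : 0 < m) (hn : 0 < n)
    (g h : X → ℝ)
    (hg : g = μ[f| MeasurableSpace.comap ((⇑T.symm)^[m]) P])
    (hh : h = μ[g| MeasurableSpace.comap ((⇑T)^[n]) P])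
    (ai aj : ℕ) (hij : n + ai + m ≤ aj) :
    (∫ x, g ((⇑T)^[ai] x) * g ((⇑T)^[aj] x) ∂μ
      = ∫ x, h ((⇑T)^[ai] x) * g ((⇑T)^[aj] x) ∂μ) ∧
    (∫ x, h ((⇑T)^[ai] x) * h ((⇑T)^[aj] x) ∂μ
      = ∫ x, g ((⇑T)^[ai] x) * h ((⇑T)^[aj] x) ∂μ) :=
  condexp_iterate_product_integrals_claim1_general P (m0 := m0) μ T hT hPm hTP f hf m n g h hg hh ai
    aj hij
end

section
/- Let (X,B,μ,T) be an invertible measure-preserving system, let P be a sub-σ-algebra of B with T⁻¹P ⊆ P, let f ∈ L²(μ), let m, n be positive integers, and set g = E(f | T^m P) and h = E(g | T^{−n} P). If a_i, a_j are nonnegative integers with a_i − m ≥ n + a_j, then ∫ (g∘T^{a_i})·(g∘T^{a_j}) dμ = ∫ (g∘T^{a_i})·(h∘T^{a_j}) dμ and ∫ (h∘T^{a_i})·(g∘T^{a_j}) dμ = ∫ (h∘T^{a_i})·(h∘T^{a_j}) dμ. -/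
open Filter MeasureTheory Topology

/-! The σ-algebras `T^{-k} P` decrease in `k`. Since `a_i - m ≥ n + a_j`, both `g ∘ T^{a_i}`
and `h ∘ T^{a_i}` are measurable for `T^{-(n + a_j)} P`, and `h ∘ T^{a_j}` is the conditional
expectation of `g ∘ T^{a_j}` onto that σ-algebra, because `T^{a_j}` preserves `μ`. Pairing an
`L²` function with `g ∘ T^{a_j}` or with its conditional expectation onto a σ-algebra for which
the function is measurable gives the same integral. -/

namespace MeasureTheory

variable {X Y : Type*} {m m0 : MeasurableSpace X} {μ : Measure X}

theorem integral_mul_condExp_of_stronglyMeasurable (hm : m ≤ m0) [SigmaFinite (μ.trim hm)]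
    {u v : X → ℝ} (hu : StronglyMeasurable[m] u) (huv : Integrable (u * v) μ)
    (hv : Integrable v μ) :
    ∫ x, u x * (μ[v|m]) x ∂μ = ∫ x, u x * v x ∂μ :=
  calc ∫ x, u x * (μ[v|m]) x ∂μ = ∫ x, (μ[u * v|m]) x ∂μ :=
        integral_congr_ae (condExp_mul_of_stronglyMeasurable_left hu huv hv).symm
    _ = ∫ x, u x * v x ∂μ := integral_condExp hm

theorem MeasurePreserving.setIntegral_preimage {E : Type*} [NormedAddCommGroup E]
    [NormedSpace ℝ E] {mY : MeasurableSpace Y} {ν : Measure Y} {e : X → Y}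
    (he : MeasurePreserving e μ ν) {φ : Y → E} (hφ : AEStronglyMeasurable φ ν) {t : Set Y}
    (ht : MeasurableSet t) :
    ∫ x in e ⁻¹' t, φ (e x) ∂μ = ∫ y in t, φ y ∂ν := by
  rw [← setIntegral_map ht (he.map_eq ▸ hφ) he.aemeasurable, he.map_eq]

theorem MeasurePreserving.condExp_comp_s9 [IsFiniteMeasure μ] {m' mY : MeasurableSpace Y}
    {ν : Measure Y} [IsFiniteMeasure ν] {e : X → Y} (he : MeasurePreserving e μ ν)
    (hm : m' ≤ mY) {g : Y → ℝ} (hg : Integrable g ν) :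
    (fun x => (ν[g|m']) (e x)) =ᵐ[μ] μ[fun x => g (e x) | m'.comap e] := by
  refine ae_eq_condExp_of_forall_setIntegral_eq
    ((MeasurableSpace.comap_mono hm).trans he.measurable.comap_le)
    (he.integrable_comp_of_integrable hg)
    (fun _ _ _ => (he.integrable_comp_of_integrable integrable_condExp).integrableOn) ?_
    (stronglyMeasurable_condExp.comp_measurable (comap_measurable e)).aestronglyMeasurable
  rintro _ ⟨t, ht, rfl⟩ -
  rw [he.setIntegral_preimage integrable_condExp.aestronglyMeasurable (hm t ht),
    he.setIntegral_preimage hg.aestronglyMeasurable (hm t ht), setIntegral_condExp hm hg ht]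

end MeasureTheory

namespace MeasurableSpace

variable {X : Type*}

theorem comap_iterate_comap_iterate (P : MeasurableSpace X) (T : X → X) (a b : ℕ) :
    (P.comap T^[a]).comap T^[b] = P.comap T^[a + b] := by
  rw [comap_comp, Function.iterate_add]

theorem antitone_comap_iterate {P : MeasurableSpace X} {T : X → X} (hTP : P.comap T ≤ P) :
    Antitone fun k => P.comap T^[k] := by
  refine antitone_nat_of_succ_le fun k => ?_
  rw [add_comm k 1, ← comap_iterate_comap_iterate, Function.iterate_one]
  exact comap_mono hTP

theorem comap_iterate_comap_iterate_of_leftInverse (P : MeasurableSpace X) {S T : X → X}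
    (hST : Function.LeftInverse S T) {k a : ℕ} (hka : k ≤ a) :
    (P.comap S^[k]).comap T^[a] = P.comap T^[a - k] := by
  obtain ⟨d, rfl⟩ := Nat.exists_eq_add_of_le hka
  rw [comap_comp, Nat.add_sub_cancel_left, Function.iterate_add, ← Function.comp_assoc,
    (hST.iterate k).comp_eq_id, Function.id_comp]

end MeasurableSpace

theorem condexp_iterate_product_integrals_claim2_general
    {X : Type*} (P : MeasurableSpace X) [m0 : MeasurableSpace X]
    (μ : Measure X) [IsProbabilityMeasure μ]
    (T : X ≃ᵐ X) (hT : MeasurePreserving (⇑T) μ μ)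
    (hPm : P ≤ m0) (hTP : MeasurableSpace.comap (⇑T) P ≤ P)
    (f : X → ℝ) (hf : MemLp f 2 μ)
    (m n : ℕ)
    (g h : X → ℝ)
    (hg : g = μ[f| MeasurableSpace.comap ((⇑T.symm)^[m]) P])
    (hh : h = μ[g| MeasurableSpace.comap ((⇑T)^[n]) P])
    (ai aj : ℕ) (hij : n + aj + m ≤ ai) :
    (∫ x, g ((⇑T)^[ai] x) * g ((⇑T)^[aj] x) ∂μ
      = ∫ x, g ((⇑T)^[ai] x) * h ((⇑T)^[aj] x) ∂μ) ∧
    (∫ x, h ((⇑T)^[ai] x) * g ((⇑T)^[aj] x) ∂μ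
      = ∫ x, h ((⇑T)^[ai] x) * h ((⇑T)^[aj] x) ∂μ) := by
  have hP_le (k : ℕ) : P.comap (⇑T)^[k] ≤ m0 :=
    (MeasurableSpace.comap_mono hPm).trans (T.measurable.iterate k).comap_le
  have hg2 : MemLp g 2 μ := hg ▸ hf.condExp one_le_two
  have hh2 : MemLp h 2 μ := hh ▸ hg2.condExp one_le_two
  have hgT : StronglyMeasurable[P.comap (⇑T)^[n + aj]] fun x => g ((⇑T)^[ai] x) := by
    have hgT_comap := (hg ▸ stronglyMeasurable_condExp).comp_measurable
      (comap_measurable (⇑T)^[ai])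
    rw [MeasurableSpace.comap_iterate_comap_iterate_of_leftInverse P T.symm_apply_apply
      (by omega)] at hgT_comap
    exact hgT_comap.mono (MeasurableSpace.antitone_comap_iterate hTP (by omega))
  have hhT : StronglyMeasurable[P.comap (⇑T)^[n + aj]] fun x => h ((⇑T)^[ai] x) := by
    have hhT_comap := (hh ▸ stronglyMeasurable_condExp).comp_measurable
      (comap_measurable (⇑T)^[ai])
    rw [MeasurableSpace.comap_iterate_comap_iterate] at hhT_comap
    exact hhT_comap.mono (MeasurableSpace.antitone_comap_iterate hTP (by omega))
  have hhT_eq : (fun x => h ((⇑T)^[aj] x)) =ᵐ[μ]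
      μ[fun x => g ((⇑T)^[aj] x) | P.comap (⇑T)^[n + aj]] := by
    rw [hh, ← MeasurableSpace.comap_iterate_comap_iterate]
    exact (hT.iterate aj).condExp_comp_s9 (hP_le n) (hg2.integrable one_le_two)
  have hgT2 : MemLp (fun x => g ((⇑T)^[aj] x)) 2 μ := hg2.comp_measurePreserving (hT.iterate aj)
  have integral_mul_g_eq {u : X → ℝ} (hu : StronglyMeasurable[P.comap (⇑T)^[n + aj]] u)
      (hu2 : MemLp u 2 μ) :
      ∫ x, u x * g ((⇑T)^[aj] x) ∂μ = ∫ x, u x * h ((⇑T)^[aj] x) ∂μ := by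
    rw [← integral_mul_condExp_of_stronglyMeasurable (hP_le _) hu (hu2.integrable_mul hgT2)
      (hgT2.integrable one_le_two)]
    exact integral_congr_ae (by filter_upwards [hhT_eq] with x hx using by rw [hx])
  exact ⟨integral_mul_g_eq hgT (hg2.comp_measurePreserving (hT.iterate ai)),
    integral_mul_g_eq hhT (hh2.comp_measurePreserving (hT.iterate ai))⟩

/-- Claim 2 in the proof of Theorem 3.2 of the paper: with `g = E(f | T^m P)` and
`h = E(g | T^{-n} P)`, if `a_i - m ≥ n + a_j` then
`∫ g∘T^{a_i} · g∘T^{a_j} dμ = ∫ g∘T^{a_i} · h∘T^{a_j} dμ` and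
`∫ h∘T^{a_i} · g∘T^{a_j} dμ = ∫ h∘T^{a_i} · h∘T^{a_j} dμ`.
Here `T^m P = {T^m A : A ∈ P}` is realized as `MeasurableSpace.comap (T.symm)^[m] P`
and `T^{-n} P = MeasurableSpace.comap T^[n] P`. -/
theorem condexp_iterate_product_integrals_claim2
    {X : Type*} (P : MeasurableSpace X) [m0 : MeasurableSpace X]
    (μ : Measure X) [IsProbabilityMeasure μ]
    (T : X ≃ᵐ X) (hT : MeasurePreserving (⇑T) μ μ)
    (hPm : P ≤ m0) (hTP : MeasurableSpace.comap (⇑T) P ≤ P)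
    (f : X → ℝ) (hf : MemLp f 2 μ)
    (m n : ℕ) (hm : 0 < m) (hn : 0 < n)
    (g h : X → ℝ)
    (hg : g = μ[f| MeasurableSpace.comap ((⇑T.symm)^[m]) P])
    (hh : h = μ[g| MeasurableSpace.comap ((⇑T)^[n]) P])
    (ai aj : ℕ) (hij : n + aj + m ≤ ai) :
    (∫ x, g ((⇑T)^[ai] x) * g ((⇑T)^[aj] x) ∂μ
      = ∫ x, g ((⇑T)^[ai] x) * h ((⇑T)^[aj] x) ∂μ) ∧
    (∫ x, h ((⇑T)^[ai] x) * g ((⇑T)^[aj] x) ∂μ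
      = ∫ x, h ((⇑T)^[ai] x) * h ((⇑T)^[aj] x) ∂μ) :=
  condexp_iterate_product_integrals_claim2_general P (m0 := m0) μ T hT hPm hTP f hf m n g h hg hh ai
    aj hij
end

section
/- Let {a_k}_{k≥1} be a pointwise good sequence of positive integers, let (X,T) be a topological dynamical system, let μ be a T-invariant Borel probability measure on X, and suppose the Pinsker σ-algebra P_μ(T) is a characteristic σ-algebra for {a_k}. Let μ = ∫ τ_x dμ(x) be the disintegration of μ with respect to the sequence {a_k} (so that (1/N) Σ_{k=1}^N f(T^{a_k} x) → ∫ f dτ_x for μ-a.e. x and every continuous f), and let μ = ∫ μ_x dμ(x) be the disintegration of μ over P_μ(T). Then there exists a Borel subset X₁ of X with μ(X₁) = 1 such that for every x ∈ X₁ and every continuous function f : X → ℝ, ∫ f dτ_x = ∫ (∫ f dτ_y) dμ_x(y). -/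
/-!
Averages of `f` along `a` are asymptotic in `L²` to averages of `E(f | P)`, and the latter are
Pinsker-measurable because `T` maps the Pinsker σ-algebra into itself (preimages under a
measure-preserving map keep their entropy). Hence the limit `x ↦ ∫ f dτ_x` agrees a.e. with a
Pinsker-measurable function, so it is a.e. equal to its own integral against the conditional
measures `μ_x`. This holds simultaneously for a countable dense family of continuous `f`, and
both sides of the identity are `1`-Lipschitz in `f` for the sup norm.
-/

open Filter MeasureTheory Topology

/-- A sequence `a` (indexed by `k ≥ 1`) is pointwise good if for every invertible
measure-preserving system and every `f ∈ L²`, the averages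
`(1/N) ∑_{k=1}^N f(S^{a_k} y)` converge a.e. -/
def PointwiseGood (a : ℕ → ℕ) : Prop :=
  ∀ (Y : Type) [MeasurableSpace Y] (ν : Measure Y) [IsProbabilityMeasure ν]
    (S : Y ≃ᵐ Y), MeasurePreserving S ν ν →
    ∀ f : Y → ℝ, MemLp f 2 ν →
      ∀ᵐ y ∂ν, ∃ c : ℝ,
        Tendsto (fun N : ℕ => (N : ℝ)⁻¹ * ∑ k ∈ Finset.Icc 1 N, f ((⇑S)^[a k] y))
          atTop (𝓝 c)

/-- The Shannon entropy `H_μ(⋁_{i=0}^{n-1} T^{-i} {A, Aᶜ})` of the refinement of the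
two-set partition `{A, Aᶜ}` along the first `n` iterates of `T`. -/
noncomputable def twoSetBlockEntropy {X : Type*} [MeasurableSpace X]
    (μ : Measure X) (T : X → X) (A : Set X) (n : ℕ) : ℝ :=
  ∑ s : Fin n → Bool,
    Real.negMulLog (μ (⋂ i : Fin n, T^[(i : ℕ)] ⁻¹' (if s i then A else Aᶜ))).toReal

/-- The measure-theoretic entropy `h_μ(T, {A, Aᶜ})` of `T` relative to the two-set
partition `{A, Aᶜ}`. -/
noncomputable def twoSetEntropy {X : Type*} [MeasurableSpace X]
    (μ : Measure X) (T : X → X) (A : Set X) : ℝ :=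
  ⨅ n : ℕ, twoSetBlockEntropy μ T A (n + 1) / (n + 1)

/-- The Pinsker σ-algebra `P_μ(T) = {A measurable : h_μ(T, {A, Aᶜ}) = 0}`. -/
def pinskerSigma {X : Type*} [MeasurableSpace X] (μ : Measure X) (T : X → X) :
    MeasurableSpace X :=
  MeasurableSpace.generateFrom {A : Set X | MeasurableSet A ∧ twoSetEntropy μ T A = 0}

section Entropy

variable {X : Type*} [MeasurableSpace X] {μ : Measure X} {T : X → X}

lemma twoSetBlockEntropy_preimage (hT : MeasurePreserving T μ μ) {A : Set X}
    (hA : MeasurableSet A) (n : ℕ) :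
    twoSetBlockEntropy μ T (T ⁻¹' A) n = twoSetBlockEntropy μ T A n := by
  refine Finset.sum_congr rfl fun s _ => ?_
  have hcyl : (⋂ i : Fin n, T^[(i : ℕ)] ⁻¹' (if s i then T ⁻¹' A else (T ⁻¹' A)ᶜ))
      = T ⁻¹' ⋂ i : Fin n, T^[(i : ℕ)] ⁻¹' (if s i then A else Aᶜ) := by
    ext x
    simp only [Set.mem_iInter, Set.mem_preimage, ← Function.iterate_succ_apply,
      Function.iterate_succ_apply']
    refine forall_congr' fun i => ?_
    cases s i <;> rfl
  have hmeas : MeasurableSet (⋂ i : Fin n, T^[(i : ℕ)] ⁻¹' (if s i then A else Aᶜ)) :=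
    .iInter fun i => hT.measurable.iterate _ (by split_ifs; exacts [hA, hA.compl])
  rw [hcyl, hT.measure_preimage hmeas.nullMeasurableSet]

lemma twoSetEntropy_preimage (hT : MeasurePreserving T μ μ) {A : Set X} (hA : MeasurableSet A) :
    twoSetEntropy μ T (T ⁻¹' A) = twoSetEntropy μ T A := by
  simp only [twoSetEntropy, twoSetBlockEntropy_preimage hT hA]

lemma pinskerSigma_le : pinskerSigma μ T ≤ ‹MeasurableSpace X› :=
  show MeasurableSpace.generateFrom _ ≤ _ from MeasurableSpace.generateFrom_le fun _ hA => hA.1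

lemma measurable_pinskerSigma (hT : MeasurePreserving T μ μ) :
    Measurable[pinskerSigma μ T, pinskerSigma μ T] T :=
  @measurable_generateFrom X X (pinskerSigma μ T) _ T fun _ hA =>
    MeasurableSpace.measurableSet_generateFrom
      ⟨hT.measurable hA.1, (twoSetEntropy_preimage hT hA.1).trans hA.2⟩

end Entropy

section Averages

variable {X : Type*}

noncomputable def seqAverage (T : X → X) (a : ℕ → ℕ) (f : X → ℝ) (N : ℕ) (x : X) : ℝ :=
  (N : ℝ)⁻¹ * ∑ k ∈ Finset.Icc 1 N, f (T^[a k] x)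

lemma seqAverage_sub (T : X → X) (a : ℕ → ℕ) (f g : X → ℝ) (N : ℕ) :
    seqAverage T a (f - g) N = seqAverage T a f N - seqAverage T a g N := by
  ext x
  simp only [seqAverage, Pi.sub_apply, Finset.sum_sub_distrib, mul_sub]

lemma measurable_seqAverage {mX : MeasurableSpace X} {T : X → X} (hT : Measurable T)
    (a : ℕ → ℕ) {f : X → ℝ} (hf : Measurable f) (N : ℕ) :
    Measurable (seqAverage T a f N) :=
  .const_mul (Finset.measurable_sum _ fun k _ => hf.comp (hT.iterate (a k))) _

end Averages

section SubSigmaAlgebra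

variable {X E : Type*} [NormedAddCommGroup E] [CompleteSpace E] {m m₀ : MeasurableSpace X}
  {μ : Measure[m₀] X}

theorem aestronglyMeasurable_of_tendsto_ae_of_tendstoInMeasure_sub {F G : ℕ → X → E}
    {L : X → E} (hG : ∀ n, StronglyMeasurable[m] (G n))
    (hF : ∀ᵐ x ∂μ, Tendsto (F · x) atTop (𝓝 (L x)))
    (hFG : TendstoInMeasure μ (fun n => F n - G n) atTop 0) :
    AEStronglyMeasurable[m] L μ := by
  obtain ⟨ns, hns, hFG_ae⟩ := hFG.exists_seq_tendsto_ae
  refine ⟨fun x => limUnder atTop fun j => G (ns j) x,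
    @StronglyMeasurable.limUnder ℕ X E m _ _ _ _ _ _ _ fun j => hG (ns j), ?_⟩
  filter_upwards [hF, hFG_ae] with x hFx hFGx
  have hGx : Tendsto (fun j => G (ns j) x) atTop (𝓝 (L x)) := by
    simpa using (hFx.comp hns.tendsto_atTop).sub hFGx
  exact hGx.limUnder_eq.symm

theorem aestronglyMeasurable_of_tendsto_seqAverage (hm : m ≤ m₀) {T : X → X}
    (hT : Measurable[m₀, m₀] T) (hTm : Measurable[m, m] T) {a : ℕ → ℕ} {f : X → ℝ}
    (hf : Measurable[m₀] f)
    (hchar : Tendsto (fun N => eLpNorm (seqAverage T a (f - μ[f|m]) N) 2 μ) atTop (𝓝 0))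
    {L : X → ℝ} (hL : ∀ᵐ x ∂μ, Tendsto (seqAverage T a f · x) atTop (𝓝 (L x))) :
    AEStronglyMeasurable[m] L μ := by
  have hcondExp : StronglyMeasurable[m] (μ[f|m]) := stronglyMeasurable_condExp
  refine aestronglyMeasurable_of_tendsto_ae_of_tendstoInMeasure_sub
    (G := seqAverage T a (μ[f|m]))
    (fun N => (measurable_seqAverage hTm a hcondExp.measurable N).stronglyMeasurable) hL ?_
  simp only [← seqAverage_sub]
  refine tendstoInMeasure_of_tendsto_eLpNorm two_ne_zero (fun N => ?_)
    aestronglyMeasurable_zero (by simpa using hchar)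
  exact (measurable_seqAverage hT a (hf.sub (hcondExp.mono hm).measurable) N).aestronglyMeasurable

end SubSigmaAlgebra

section Disintegration

variable {X : Type*} {m m₀ : MeasurableSpace X} {μ : Measure[m₀] X}

def IsDisintegration (m : MeasurableSpace X) (μ : Measure[m₀] X) (κ : X → Measure[m₀] X) :
    Prop :=
  ∀ f : X → ℝ, Integrable f μ → μ[f|m] =ᵐ[μ] fun x => ∫ y, f y ∂(κ x)

namespace IsDisintegration

variable {κ : X → Measure[m₀] X}

theorem ae_ae_of_ae (hκ : IsDisintegration m μ κ) [∀ x, IsFiniteMeasure (κ x)] {p : X → Prop}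
    (hp : ∀ᵐ y ∂μ, p y) :
    ∀ᵐ x ∂μ, ∀ᵐ y ∂(κ x), p y := by
  set s := toMeasurable μ {y | ¬p y}
  have hs : MeasurableSet s := measurableSet_toMeasurable _ _
  have hs_null : μ s = 0 := by rwa [measure_toMeasurable, ← ae_iff]
  have hind : s.indicator (1 : X → ℝ) =ᵐ[μ] 0 := indicator_meas_zero hs_null
  have hcondExp : μ[s.indicator (1 : X → ℝ)|m] =ᵐ[μ] 0 := by
    simpa only [condExp_zero] using condExp_congr_ae (m := m) hind
  have hint : Integrable (s.indicator (1 : X → ℝ)) μ := (integrable_zero X ℝ μ).congr hind.symm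
  filter_upwards [(hκ _ hint).symm.trans hcondExp] with x hx
  rw [Pi.zero_apply, integral_indicator_one hs, measureReal_eq_zero_iff] at hx
  exact measure_mono_null (subset_toMeasurable _ _) hx

theorem ae_eq_integral (hκ : IsDisintegration m μ κ) (hm : m ≤ m₀) [IsFiniteMeasure μ]
    {g : X → ℝ} (hg : StronglyMeasurable[m] g) (hgi : Integrable g μ) :
    ∀ᵐ x ∂μ, g x = ∫ y, g y ∂(κ x) := by
  have h := hκ g hgi
  rwa [condExp_of_stronglyMeasurable hm hg hgi] at h

theorem ae_aestronglyMeasurable_and_eq_integral (hκ : IsDisintegration m μ κ) (hm : m ≤ m₀)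
    [IsFiniteMeasure μ] [∀ x, IsFiniteMeasure (κ x)] {g : X → ℝ} (hg : AEStronglyMeasurable[m] g μ)
    (hgi : Integrable g μ) :
    ∀ᵐ x ∂μ, AEStronglyMeasurable g (κ x) ∧ g x = ∫ y, g y ∂(κ x) := by
  obtain ⟨g', hg'm, hgg'⟩ := hg
  filter_upwards [hκ.ae_ae_of_ae hgg', hκ.ae_eq_integral hm hg'm (hgi.congr hgg'), hgg']
    with x hx_ae hx_int hx
  exact ⟨⟨g', hg'm.mono hm, hx_ae⟩, by rw [hx, hx_int, integral_congr_ae hx_ae]⟩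

end IsDisintegration

end Disintegration

section ContinuousFunctions

variable {X Y : Type*} [TopologicalSpace X] [CompactSpace X] [MeasurableSpace X]
  [OpensMeasurableSpace X] [MeasurableSpace Y]

namespace ContinuousMap

lemma norm_integral_le_norm (ν : Measure X) [IsProbabilityMeasure ν] (f : C(X, ℝ)) :
    ‖∫ x, f x ∂ν‖ ≤ ‖f‖ := by
  simpa using (BoundedContinuousFunction.mkOfCompact f).norm_integral_le_norm ν

lemma lipschitzWith_integral (ν : Measure X) [IsProbabilityMeasure ν] :
    LipschitzWith 1 fun f : C(X, ℝ) => ∫ x, f x ∂ν := by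
  have hint (f : C(X, ℝ)) : Integrable f ν := (BoundedContinuousFunction.mkOfCompact f).integrable ν
  refine LipschitzWith.of_dist_le_mul fun f g => ?_
  rw [NNReal.coe_one, one_mul, dist_eq_norm, dist_eq_norm, ← integral_sub (hint f) (hint g)]
  exact norm_integral_le_norm ν (f - g)

end ContinuousMap

variable {τ : Y → Measure X} [∀ y, IsProbabilityMeasure (τ y)] {ν : Measure Y}

lemma integrable_integral_continuousMap [IsFiniteMeasure ν] {f : C(X, ℝ)}
    (hf : AEStronglyMeasurable (fun y => ∫ x, f x ∂(τ y)) ν) :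
    Integrable (fun y => ∫ x, f x ∂(τ y)) ν :=
  .of_bound hf ‖f‖ (ae_of_all _ fun y => ContinuousMap.norm_integral_le_norm (τ y) f)

lemma isClosed_setOf_aestronglyMeasurable_integral :
    IsClosed {f : C(X, ℝ) | AEStronglyMeasurable (fun y => ∫ x, f x ∂(τ y)) ν} :=
  IsSeqClosed.isClosed fun _ f hu hlim => aestronglyMeasurable_of_tendsto_ae atTop hu <|
    ae_of_all _ fun y =>
      ((ContinuousMap.lipschitzWith_integral (τ y)).continuous.tendsto f).comp hlim

lemma aestronglyMeasurable_integral_of_denseRange {ι : Type*} {u : ι → C(X, ℝ)}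
    (hu : DenseRange u) (h : ∀ i, AEStronglyMeasurable (fun y => ∫ x, u i x ∂(τ y)) ν)
    (f : C(X, ℝ)) : AEStronglyMeasurable (fun y => ∫ x, f x ∂(τ y)) ν := by
  have hsub := closure_minimal (s := Set.range u) (Set.range_subset_iff.2 h)
    (isClosed_setOf_aestronglyMeasurable_integral (τ := τ) (ν := ν))
  rw [hu.closure_range] at hsub
  exact hsub (Set.mem_univ f)

lemma lipschitzWith_integral_integral [IsProbabilityMeasure ν]
    (hmeas : ∀ f : C(X, ℝ), AEStronglyMeasurable (fun y => ∫ x, f x ∂(τ y)) ν) :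
    LipschitzWith 1 fun f : C(X, ℝ) => ∫ y, ∫ x, f x ∂(τ y) ∂ν := by
  refine LipschitzWith.of_dist_le_mul fun f g => ?_
  rw [NNReal.coe_one, one_mul, dist_eq_norm, ← integral_sub
    (integrable_integral_continuousMap (hmeas f)) (integrable_integral_continuousMap (hmeas g))]
  simpa using norm_integral_le_of_norm_le_const (μ := ν) <| ae_of_all _ fun y =>
    (dist_eq_norm (∫ x, f x ∂(τ y)) _).symm.trans_le
      ((ContinuousMap.lipschitzWith_integral (τ y)).dist_le_mul f g |>.trans_eq (one_mul _))

theorem integral_eq_integral_integral_of_denseRange [IsProbabilityMeasure ν] {ρ : Measure X}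
    [IsProbabilityMeasure ρ] {ι : Type*} {u : ι → C(X, ℝ)} (hu : DenseRange u)
    (h : ∀ i, AEStronglyMeasurable (fun y => ∫ x, u i x ∂(τ y)) ν ∧
      ∫ x, u i x ∂ρ = ∫ y, ∫ x, u i x ∂(τ y) ∂ν)
    (f : C(X, ℝ)) : ∫ x, f x ∂ρ = ∫ y, ∫ x, f x ∂(τ y) ∂ν := by
  have hmeas := aestronglyMeasurable_integral_of_denseRange hu fun i => (h i).1
  exact congrFun (hu.equalizer (ContinuousMap.lipschitzWith_integral ρ).continuous
    (lipschitzWith_integral_integral hmeas).continuous (funext fun i => (h i).2)) f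

end ContinuousFunctions

theorem limit_measure_constant_on_pinsker_atoms_general
    {X : Type*} [MetricSpace X] [CompactSpace X] [MeasurableSpace X] [BorelSpace X]
    (T : X ≃ₜ X) (μ : Measure X) [IsProbabilityMeasure μ]
    (hTμ : MeasurePreserving (⇑T) μ μ)
    (a : ℕ → ℕ)
    (hchar : ∀ f : X → ℝ, MemLp f 2 μ →
      Tendsto (fun N : ℕ =>
          eLpNorm (fun x => (N : ℝ)⁻¹ * ∑ k ∈ Finset.Icc 1 N,
            (f ((⇑T)^[a k] x) -
              (μ[f| pinskerSigma μ (⇑T)]) ((⇑T)^[a k] x))) 2 μ)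
        atTop (𝓝 0))
    (τ : X → Measure X) (hτprob : ∀ x, IsProbabilityMeasure (τ x))
    (hτ : ∀ᵐ x ∂μ, ∀ f : C(X, ℝ),
      Tendsto (fun N : ℕ => (N : ℝ)⁻¹ * ∑ k ∈ Finset.Icc 1 N, f ((⇑T)^[a k] x))
        atTop (𝓝 (∫ y, f y ∂(τ x))))
    (μdis : X → Measure X) (hμdisprob : ∀ x, IsProbabilityMeasure (μdis x))
    (hμdis : ∀ f : X → ℝ, Integrable f μ →
      (μ[f| pinskerSigma μ (⇑T)]) =ᵐ[μ] fun x => ∫ y, f y ∂(μdis x)) :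
    ∃ X₁ : Set X, MeasurableSet X₁ ∧ μ X₁ = 1 ∧
      ∀ x ∈ X₁, ∀ f : C(X, ℝ),
        ∫ y, f y ∂(τ x) = ∫ y, (∫ z, f z ∂(τ y)) ∂(μdis x) := by
  have hlimit (f : C(X, ℝ)) : ∀ᵐ x ∂μ,
      AEStronglyMeasurable (fun y => ∫ z, f z ∂(τ y)) (μdis x) ∧
        ∫ y, f y ∂(τ x) = ∫ y, (∫ z, f z ∂(τ y)) ∂(μdis x) := by
    have hpinsker : AEStronglyMeasurable[pinskerSigma μ T] (fun x => ∫ y, f y ∂(τ x)) μ :=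
      aestronglyMeasurable_of_tendsto_seqAverage pinskerSigma_le hTμ.measurable
        (measurable_pinskerSigma hTμ) f.continuous.measurable (hchar f (f.memLp μ ℝ))
        (hτ.mono fun x hx => hx f)
    exact IsDisintegration.ae_aestronglyMeasurable_and_eq_integral hμdis pinskerSigma_le
      hpinsker (integrable_integral_continuousMap (hpinsker.mono pinskerSigma_le))
  obtain ⟨u, hu⟩ := TopologicalSpace.exists_dense_seq C(X, ℝ)
  obtain ⟨X₁, hX₁_ae, hX₁, hX₁_limit⟩ :=
    (ae_all_iff.2 fun n => hlimit (u n)).exists_measurable_mem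
  exact ⟨X₁, hX₁, (prob_compl_eq_zero_iff hX₁).1 (mem_ae_iff.1 hX₁_ae), fun x hx f =>
    integral_eq_integral_integral_of_denseRange hu (hX₁_limit x hx) f⟩

/-- If the Pinsker σ-algebra is characteristic for a pointwise good sequence `a`, then,
with `μ = ∫ τ_x dμ(x)` the disintegration of `μ` with respect to `a` and
`μ = ∫ μ_x dμ(x)` the disintegration of `μ` over the Pinsker σ-algebra, one has
`∫ f dτ_x = ∫ (∫ f dτ_y) dμ_x(y)` for a.e. `x` and every continuous `f`. -/
theorem limit_measure_constant_on_pinsker_atoms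
    {X : Type*} [MetricSpace X] [CompactSpace X] [MeasurableSpace X] [BorelSpace X]
    (T : X ≃ₜ X) (μ : Measure X) [IsProbabilityMeasure μ]
    (hTμ : MeasurePreserving (⇑T) μ μ)
    (a : ℕ → ℕ) (hapos : ∀ k, 1 ≤ k → 0 < a k)
    (hamono : ∀ i j, 1 ≤ i → i < j → a i < a j)
    (hgood : PointwiseGood a)
    (hchar : ∀ f : X → ℝ, MemLp f 2 μ →
      Tendsto (fun N : ℕ =>
          eLpNorm (fun x => (N : ℝ)⁻¹ * ∑ k ∈ Finset.Icc 1 N,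
            (f ((⇑T)^[a k] x) -
              (μ[f| pinskerSigma μ (⇑T)]) ((⇑T)^[a k] x))) 2 μ)
        atTop (𝓝 0))
    (τ : X → Measure X) (hτprob : ∀ x, IsProbabilityMeasure (τ x))
    (hτ : ∀ᵐ x ∂μ, ∀ f : C(X, ℝ),
      Tendsto (fun N : ℕ => (N : ℝ)⁻¹ * ∑ k ∈ Finset.Icc 1 N, f ((⇑T)^[a k] x))
        atTop (𝓝 (∫ y, f y ∂(τ x))))
    (μdis : X → Measure X) (hμdisprob : ∀ x, IsProbabilityMeasure (μdis x))
    (hμdis : ∀ f : X → ℝ, Integrable f μ →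
      (μ[f| pinskerSigma μ (⇑T)]) =ᵐ[μ] fun x => ∫ y, f y ∂(μdis x)) :
    ∃ X₁ : Set X, MeasurableSet X₁ ∧ μ X₁ = 1 ∧
      ∀ x ∈ X₁, ∀ f : C(X, ℝ),
        ∫ y, f y ∂(τ x) = ∫ y, (∫ z, f z ∂(τ y)) ∂(μdis x) :=
  limit_measure_constant_on_pinsker_atoms_general T μ hTμ a hchar τ hτprob hτ μdis hμdisprob hμdis
end

section
/- Let p(x) = b_0 + b_1 x + ⋯ + b_m x^m be a polynomial with real coefficients, m ≥ 1 and b_m > 0, and set a_k = [p(k)] (the integer part of p(k)) for k ≥ 1. Then the sequence {a_k}_{k≥1} satisfies Condition (*): for every L > 0, lim_{N→∞} (1/N²)·#{(i,j) ∈ {1,…,N}² : |a_i − a_j| ≤ L} = 0. -/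
open Filter Topology

open scoped Classical in
/-- `#{(i,j) ∈ [1,N]² : |a_i - a_j| ≤ L}` for an integer-valued sequence. -/
noncomputable def starCountZ (a : ℕ → ℤ) (L : ℝ) (N : ℕ) : ℕ :=
  ((Finset.Icc 1 N ×ˢ Finset.Icc 1 N).filter
    fun p : ℕ × ℕ => |(a p.1 : ℝ) - (a p.2 : ℝ)| ≤ L).card

open scoped Classical in
/-- If each first-coordinate fiber of the pair count is bounded by `C`, then the whole
count is at most `C * N`. -/
lemma starCountZ_le_of_fiber_bound (a : ℕ → ℤ) (L : ℝ) (N C : ℕ)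
    (h : ∀ i,
      ((Finset.Icc 1 N).filter fun j => |(a i : ℝ) - (a j : ℝ)| ≤ L).card ≤ C) :
    starCountZ a L N ≤ C * N := by
  classical
  set S := ((Finset.Icc 1 N ×ˢ Finset.Icc 1 N).filter
    fun p : ℕ × ℕ => |(a p.1 : ℝ) - (a p.2 : ℝ)| ≤ L) with hS
  have hmem : ∀ q ∈ S, q.1 ∈ Finset.Icc 1 N := by
    intro q hq
    exact (Finset.mem_product.1 (Finset.mem_filter.1 hq).1).1
  have hcard : S.card = ∑ i ∈ Finset.Icc 1 N, (S.filter fun q => q.1 = i).card :=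
    Finset.card_eq_sum_card_fiberwise hmem
  have hb : ∀ i ∈ Finset.Icc 1 N, (S.filter fun q => q.1 = i).card ≤ C := by
    intro i _
    refine le_trans ?_ (h i)
    apply Finset.card_le_card_of_injOn (fun q => q.2)
    · intro q hq
      rcases Finset.mem_filter.1 hq with ⟨hq1, hq2⟩
      rcases Finset.mem_filter.1 hq1 with ⟨hq3, hq4⟩
      refine Finset.mem_filter.2 ⟨(Finset.mem_product.1 hq3).2, ?_⟩
      rw [← hq2]; exact hq4
    · intro q hq q' hq' hqq
      rcases Finset.mem_filter.1 hq with ⟨_, h1⟩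
      rcases Finset.mem_filter.1 hq' with ⟨_, h2⟩
      exact Prod.ext (h1.trans h2.symm) hqq
  calc starCountZ a L N = S.card := rfl
    _ = ∑ i ∈ Finset.Icc 1 N, (S.filter fun q => q.1 = i).card := hcard
    _ ≤ ∑ _i ∈ Finset.Icc 1 N, C := Finset.sum_le_sum hb
    _ = (Finset.Icc 1 N).card * C := by rw [Finset.sum_const, smul_eq_mul]
    _ ≤ N * C := by
        apply Nat.mul_le_mul_right
        simp [Nat.card_Icc]
    _ = C * N := Nat.mul_comm _ _

/-- A polynomial with positive leading coefficient has derivative eventually bounded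
below by a positive constant, provided its degree is at least 1. -/
lemma derivative_eventually_ge (p : Polynomial ℝ) (hdeg : 1 ≤ p.natDegree)
    (hlead : 0 < p.leadingCoeff) :
    ∃ c : ℝ, 0 < c ∧ ∃ x₀ : ℝ, ∀ x ≥ x₀, c ≤ p.derivative.eval x := by
  set d := p.derivative with hd
  have hdegd : d.degree = (p.natDegree - 1 : ℕ) :=
    Polynomial.degree_derivative_eq p (by omega)
  have hcoeff : d.coeff (p.natDegree - 1) = p.leadingCoeff * (p.natDegree : ℝ) := by
    rw [hd, Polynomial.coeff_derivative]
    have h1 : p.natDegree - 1 + 1 = p.natDegree := by omega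
    rw [Polynomial.leadingCoeff]
    rw [show ((p.natDegree - 1 : ℕ) + 1 : ℝ) = ((p.natDegree - 1 + 1 : ℕ) : ℝ) by push_cast; ring]
    rw [h1]
  have hnatd : d.natDegree = p.natDegree - 1 := Polynomial.natDegree_eq_of_degree_eq_some hdegd
  have hnpos : (0 : ℝ) < (p.natDegree : ℝ) := by exact_mod_cast Nat.lt_of_lt_of_le Nat.zero_lt_one hdeg
  have hleadd : d.leadingCoeff = p.leadingCoeff * (p.natDegree : ℝ) := by
    rw [Polynomial.leadingCoeff, hnatd, hcoeff]
  have hleadd_pos : 0 < d.leadingCoeff := by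
    rw [hleadd]; exact mul_pos hlead hnpos
  rcases eq_or_lt_of_le hdeg with h1 | h2
  · -- natDegree p = 1, d is a nonzero constant
    have hnat0 : d.natDegree = 0 := by omega
    refine ⟨d.leadingCoeff, hleadd_pos, 0, fun x _ => ?_⟩
    have hdc : d = Polynomial.C (d.coeff 0) := Polynomial.eq_C_of_natDegree_eq_zero hnat0
    rw [Polynomial.leadingCoeff, hnat0]
    conv_rhs => rw [hdc]
    simp
  · -- natDegree p ≥ 2, derivative tends to atTop
    have hdpos : 0 < d.degree := by
      rw [hdegd]
      exact_mod_cast Nat.sub_pos_of_lt h2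
    have htend : Tendsto (fun x => d.eval x) atTop atTop :=
      Polynomial.tendsto_atTop_of_leadingCoeff_nonneg d hdpos hleadd_pos.le
    rcases (htend.eventually_ge_atTop 1).exists_forall_of_atTop with ⟨x₀, hx₀⟩
    exact ⟨1, one_pos, x₀, fun x hx => hx₀ x hx⟩

/-- Linear growth bound from a lower bound on the derivative. -/
lemma eval_growth (p : Polynomial ℝ) (c x₀ : ℝ)
    (hx₀ : ∀ x ≥ x₀, c ≤ p.derivative.eval x) :
    ∀ x y : ℝ, x₀ ≤ x → x ≤ y → c * (y - x) ≤ p.eval y - p.eval x := by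
  intro x y hx hxy
  have hmono : MonotoneOn (fun t => p.eval t - c * t) (Set.Ici x₀) := by
    apply monotoneOn_of_deriv_nonneg (convex_Ici x₀)
    · exact ((p.continuous_aeval).sub (continuous_const.mul continuous_id)).continuousOn
    · intro t _
      exact (((p.differentiable).sub ((differentiable_id.const_mul c))) t).differentiableWithinAt
    · intro t ht
      have hderiv : HasDerivAt (fun t => p.eval t - c * t) (p.derivative.eval t - c * 1) t :=
        (p.hasDerivAt t).sub ((hasDerivAt_id t).const_mul c)
      rw [hderiv.deriv]
      have : x₀ ≤ t := le_of_lt (by simpa [interior_Ici] using ht)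
      have := hx₀ t this
      linarith
  have h1 : p.eval x - c * x ≤ p.eval y - c * y :=
    hmono (Set.mem_Ici.2 hx) (Set.mem_Ici.2 (hx.trans hxy)) hxy
  linarith

/-- The sequence `a k = [p(k)]`, for a real polynomial `p` of degree `m ≥ 1` with
positive leading coefficient, satisfies Condition (*). -/
theorem polynomial_floor_satisfies_condition_star
    (p : Polynomial ℝ) (hdeg : 1 ≤ p.natDegree) (hlead : 0 < p.leadingCoeff)
    (a : ℕ → ℤ) (ha : ∀ k, a k = ⌊p.eval (k : ℝ)⌋) :
    ∀ L : ℝ, 0 < L →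
      Tendsto (fun N : ℕ => (starCountZ a L N : ℝ) / (N : ℝ) ^ 2) atTop (𝓝 0) := by
  classical
  intro L hL
  obtain ⟨c, hc, x₀, hx₀⟩ := derivative_eventually_ge p hdeg hlead
  have hgrow := eval_growth p c x₀ hx₀
  obtain ⟨K, hK⟩ := exists_nat_ge x₀
  set D : ℝ := (2 * L + 2) / c with hD
  have hD0 : 0 ≤ D := by positivity
  set C : ℕ := K + ⌊D⌋₊ + 1 with hC
  -- floor bounds
  have hfl : ∀ k : ℕ, (a k : ℝ) ≤ p.eval (k : ℝ) ∧ p.eval (k : ℝ) < (a k : ℝ) + 1 := by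
    intro k
    rw [ha k]
    exact ⟨Int.floor_le _, Int.lt_floor_add_one _⟩
  -- fiber bound
  have hfib : ∀ N : ℕ, ∀ i,
      ((Finset.Icc 1 N).filter fun j => |(a i : ℝ) - (a j : ℝ)| ≤ L).card ≤ C := by
    intro N i
    set T := (Finset.Icc 1 N).filter fun j => |(a i : ℝ) - (a j : ℝ)| ≤ L with hT
    have hsplit : (T.filter fun j => j < K).card + (T.filter fun j => ¬ j < K).card = T.card :=
      Finset.card_filter_add_card_filter_not _
    have h1 : (T.filter fun j => j < K).card ≤ K := by
      refine le_trans (Finset.card_le_card ?_) (by simp : (Finset.range K).card ≤ K)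
      intro j hj
      exact Finset.mem_range.2 (Finset.mem_filter.1 hj).2
    have h2 : (T.filter fun j => ¬ j < K).card ≤ ⌊D⌋₊ + 1 := by
      set T₂ := T.filter fun j => ¬ j < K with hT₂
      rcases T₂.eq_empty_or_nonempty with he | hne
      · simp [he]
      · set j₀ := T₂.min' hne with hj₀
        have hj₀mem : j₀ ∈ T₂ := T₂.min'_mem hne
        have hsub : T₂ ⊆ Finset.Icc j₀ (j₀ + ⌊D⌋₊) := by
          intro j hj
          have hjge : j₀ ≤ j := T₂.min'_le j hj
          refine Finset.mem_Icc.2 ⟨hjge, ?_⟩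
          -- distance bound between a j and a j₀
          have hja : |(a i : ℝ) - (a j : ℝ)| ≤ L :=
            (Finset.mem_filter.1 (Finset.mem_filter.1 hj).1).2
          have hj₀a : |(a i : ℝ) - (a j₀ : ℝ)| ≤ L :=
            (Finset.mem_filter.1 (Finset.mem_filter.1 hj₀mem).1).2
          have haa : |(a j : ℝ) - (a j₀ : ℝ)| ≤ 2 * L := by
            have := abs_sub_abs_le_abs_sub ((a i : ℝ) - a j₀) ((a i : ℝ) - a j)
            have h3 := abs_sub ((a i : ℝ) - a j₀) ((a i : ℝ) - a j)
            calc |(a j : ℝ) - (a j₀ : ℝ)| = |((a i : ℝ) - a j₀) - ((a i : ℝ) - a j)| := by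
                  ring_nf
              _ ≤ |(a i : ℝ) - a j₀| + |(a i : ℝ) - a j| := abs_sub _ _
              _ ≤ 2 * L := by linarith
          have hpj := hfl j
          have hpj₀ := hfl j₀
          have hKj₀ : (K : ℝ) ≤ (j₀ : ℝ) := by
            exact_mod_cast Nat.le_of_not_lt (Finset.mem_filter.1 hj₀mem).2
          have hjj : (j₀ : ℝ) ≤ (j : ℝ) := by exact_mod_cast hjge
          have hcb : c * ((j : ℝ) - (j₀ : ℝ)) ≤ p.eval (j : ℝ) - p.eval (j₀ : ℝ) :=
            hgrow _ _ (hK.trans hKj₀) hjj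
          have habs := abs_le.1 haa
          have hub : p.eval (j : ℝ) - p.eval (j₀ : ℝ) ≤ 2 * L + 2 := by
            have := hpj.2; have := hpj₀.1
            have h4 : (a j : ℝ) - (a j₀ : ℝ) ≤ 2 * L := habs.2
            linarith
          have hdist : (j : ℝ) - (j₀ : ℝ) ≤ D := by
            rw [hD, le_div_iff₀ hc]
            calc ((j : ℝ) - j₀) * c = c * ((j : ℝ) - j₀) := by ring
              _ ≤ p.eval _ - p.eval _ := hcb
              _ ≤ 2 * L + 2 := hub
          have : ((j - j₀ : ℕ) : ℝ) ≤ D := by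
            rw [Nat.cast_sub hjge]; exact hdist
          have := Nat.le_floor this
          omega
        calc T₂.card ≤ (Finset.Icc j₀ (j₀ + ⌊D⌋₊)).card := Finset.card_le_card hsub
          _ = ⌊D⌋₊ + 1 := by rw [Nat.card_Icc]; omega
    omega
  -- total bound and squeeze
  have htotal : ∀ N : ℕ, starCountZ a L N ≤ C * N := fun N =>
    starCountZ_le_of_fiber_bound a L N C (hfib N)
  apply squeeze_zero (g := fun N : ℕ => (C : ℝ) / N)
  · intro N; positivity
  · intro N
    rcases Nat.eq_zero_or_pos N with rfl | hN
    · simp [starCountZ]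
    · have hNpos : (0 : ℝ) < N := by exact_mod_cast hN
      rw [div_le_div_iff₀ (by positivity) hNpos]
      have hb : (starCountZ a L N : ℝ) ≤ (C : ℝ) * N := by exact_mod_cast htotal N
      nlinarith
  · exact tendsto_const_div_atTop_nhds_zero_nat _
end

section
/- Let r > 0 be a non-integer real number and set a_k = [k^r] (the integer part of k^r) for k ≥ 1. Then the sequence {a_k}_{k≥1} satisfies Condition (*): for every L > 0, lim_{N→∞} (1/N²)·#{(i,j) ∈ {1,…,N}² : |a_i − a_j| ≤ L} = 0. -/
open Filter Topology

/-!
On `[1, N]` the derivative of `t ↦ t ^ r` is at least `r * N ^ (min r 1 - 1)`, so by the mean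
value theorem `|⌊i ^ r⌋ - ⌊j ^ r⌋| ≤ L` forces `|i - j| ≤ (L + 1) / r * N ^ (1 - min r 1)`, which
is `o(N)`. Each `i ≤ N` therefore has `o(N)` partners `j`, and the number of close pairs is `o(N²)`.
-/

open Finset in
lemma card_filter_le_of_abs_sub_le {P : ℕ × ℕ → Prop} [DecidablePred P] {N : ℕ} {K : ℝ}
    (hK : 0 ≤ K) (h : ∀ i ∈ Icc 1 N, ∀ j ∈ Icc 1 N, P (i, j) → |(i : ℝ) - j| ≤ K) :
    (((Icc 1 N ×ˢ Icc 1 N).filter P).card : ℝ) ≤ N * (2 * K + 1) := by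
  set k := ⌊K⌋₊
  have hsub : (Icc 1 N ×ˢ Icc 1 N).filter P ⊆
      (Icc 1 N).biUnion fun i => {i} ×ˢ Icc (i - k) (i + k) := by
    rintro ⟨i, j⟩ hp
    obtain ⟨hij, hP⟩ := mem_filter.1 hp
    obtain ⟨hi, hj⟩ := mem_product.1 hij
    have hdist : ((i : ℤ) - j).natAbs ≤ k := Nat.le_floor <| by
      simpa [Nat.cast_natAbs] using h i hi j hj hP
    simp only [mem_biUnion, mem_product, mem_singleton, mem_Icc]
    exact ⟨i, mem_Icc.1 hi, rfl, by omega, by omega⟩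
  have hcard : ((Icc 1 N).biUnion fun i => {i} ×ˢ Icc (i - k) (i + k)).card ≤ N * (2 * k + 1) :=
    calc _ ≤ ∑ i ∈ Icc 1 N, ({i} ×ˢ Icc (i - k) (i + k)).card := card_biUnion_le
      _ ≤ ∑ _i ∈ Icc 1 N, (2 * k + 1) := sum_le_sum fun i _ => by
          rw [card_product, card_singleton, one_mul, Nat.card_Icc]; omega
      _ = N * (2 * k + 1) := by simp
  calc (((Icc 1 N ×ˢ Icc 1 N).filter P).card : ℝ) ≤ N * (2 * k + 1) := by
        exact_mod_cast (card_le_card hsub).trans hcard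
    _ ≤ N * (2 * K + 1) := by gcongr; exact Nat.floor_le hK

lemma tendsto_starCountZ_div_sq_of_abs_sub_le {a : ℕ → ℤ} {L : ℝ} (K : ℕ → ℝ)
    (hK₀ : ∀ N, 0 ≤ K N) (hK : Tendsto (fun N => K N / N) atTop (𝓝 0))
    (hclose : ∀ N, ∀ i ∈ Finset.Icc 1 N, ∀ j ∈ Finset.Icc 1 N,
      |(a i : ℝ) - a j| ≤ L → |(i : ℝ) - j| ≤ K N) :
    Tendsto (fun N : ℕ => (starCountZ a L N : ℝ) / (N : ℝ) ^ 2) atTop (𝓝 0) := by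
  have hbound : Tendsto (fun N : ℕ => 2 * (K N / N) + 1 / (N : ℝ)) atTop (𝓝 0) := by
    simpa using (hK.const_mul 2).add tendsto_one_div_atTop_nhds_zero_nat
  refine squeeze_zero' (Eventually.of_forall fun N => by positivity) ?_ hbound
  filter_upwards [eventually_gt_atTop 0] with N hN
  have hcount : (starCountZ a L N : ℝ) ≤ N * (2 * K N + 1) :=
    card_filter_le_of_abs_sub_le (hK₀ N) fun i hi j hj => hclose N i hi j hj
  have hN : (0 : ℝ) < N := by exact_mod_cast hN
  calc (starCountZ a L N : ℝ) / (N : ℝ) ^ 2 ≤ N * (2 * K N + 1) / (N : ℝ) ^ 2 := by gcongr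
    _ = 2 * (K N / N) + 1 / (N : ℝ) := by field_simp

open Set in
lemma mul_sub_le_rpow_mul_rpow_sub {r N x y : ℝ} (hr : 0 < r) (hx : x ∈ Icc 1 N)
    (hy : y ∈ Icc 1 N) (hxy : x ≤ y) :
    r * (y - x) ≤ N ^ (1 - min r 1) * (y ^ r - x ^ r) := by
  have hderiv : ∀ t ∈ interior (Icc 1 N),
      HasDerivAt (fun t => N ^ (1 - min r 1) * t ^ r) (N ^ (1 - min r 1) * (r * t ^ (r - 1))) t := by
    intro t ht
    rw [interior_Icc] at ht
    exact (Real.hasDerivAt_rpow_const (Or.inl (by linarith [ht.1]))).const_mul _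
  have hderiv_ge : ∀ t ∈ interior (Icc 1 N), r ≤ deriv (fun t => N ^ (1 - min r 1) * t ^ r) t := by
    intro t ht
    rw [(hderiv t ht).deriv]
    rw [interior_Icc] at ht
    have ht0 : 0 < t := by linarith [ht.1]
    have hgrowth : 1 ≤ N ^ (1 - min r 1) * t ^ (r - 1) :=
      calc (1 : ℝ) ≤ t ^ (r - min r 1) := Real.one_le_rpow ht.1.le (by linarith [min_le_left r 1])
        _ = t ^ (1 - min r 1) * t ^ (r - 1) := by rw [← Real.rpow_add ht0]; ring_nf
        _ ≤ N ^ (1 - min r 1) * t ^ (r - 1) := by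
            gcongr
            · linarith [min_le_right r 1]
            · exact ht.2.le
    nlinarith
  simpa [mul_sub] using (convex_Icc 1 N).mul_sub_le_image_sub_of_le_deriv
    (fun t ht => (Real.continuousAt_rpow_const t r (Or.inl (by linarith [ht.1]))).const_mul _
      |>.continuousWithinAt)
    (fun t ht => (hderiv t ht).differentiableAt.differentiableWithinAt) hderiv_ge x hx y hy hxy

lemma abs_sub_le_of_abs_floor_rpow_sub_le {r N x y L : ℝ} (hr : 0 < r) (hx : x ∈ Set.Icc 1 N)
    (hy : y ∈ Set.Icc 1 N) (h : |(⌊x ^ r⌋ : ℝ) - ⌊y ^ r⌋| ≤ L) :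
    |x - y| ≤ (L + 1) / r * N ^ (1 - min r 1) := by
  wlog hxy : x ≤ y generalizing x y
  · rw [abs_sub_comm] at h ⊢
    exact this hy hx h (le_of_not_ge hxy)
  have hN : 0 ≤ N ^ (1 - min r 1) := Real.rpow_nonneg (by linarith [hx.1, hx.2]) _
  have hrpow : y ^ r - x ^ r ≤ L + 1 := by
    have := (abs_le.1 h).1
    linarith [Int.floor_le (x ^ r), Int.lt_floor_add_one (y ^ r)]
  rw [abs_sub_comm, abs_of_nonneg (sub_nonneg.2 hxy), div_mul_eq_mul_div, le_div_iff₀ hr]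
  calc (y - x) * r ≤ N ^ (1 - min r 1) * (y ^ r - x ^ r) := by
        linarith [mul_sub_le_rpow_mul_rpow_sub hr hx hy hxy]
    _ ≤ (L + 1) * N ^ (1 - min r 1) := by nlinarith

theorem rpow_floor_satisfies_condition_star_general
    (r : ℝ) (hr : 0 < r)
    (a : ℕ → ℤ) (ha : ∀ k, a k = ⌊(k : ℝ) ^ r⌋) :
    ∀ L : ℝ, 0 < L →
      Tendsto (fun N : ℕ => (starCountZ a L N : ℝ) / (N : ℝ) ^ 2) atTop (𝓝 0) := by
  intro L hL
  have hs : 0 < min r 1 := lt_min hr one_pos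
  refine tendsto_starCountZ_div_sq_of_abs_sub_le (fun N => (L + 1) / r * (N : ℝ) ^ (1 - min r 1))
    (fun N => by positivity) ?_ fun N i hi j hj hij => ?_
  · have hdecay : Tendsto (fun N : ℕ => (N : ℝ) ^ (-min r 1)) atTop (𝓝 0) :=
      (tendsto_rpow_neg_atTop hs).comp tendsto_natCast_atTop_atTop
    refine (mul_zero ((L + 1) / r) ▸ hdecay.const_mul ((L + 1) / r)).congr' ?_
    filter_upwards [eventually_gt_atTop 0] with N hN
    rw [mul_div_assoc, ← Real.rpow_sub_one (by positivity)]
    ring_nf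
  · rw [Finset.mem_Icc] at hi hj
    rw [ha, ha] at hij
    exact abs_sub_le_of_abs_floor_rpow_sub_le hr
      ⟨by exact_mod_cast hi.1, by exact_mod_cast hi.2⟩
      ⟨by exact_mod_cast hj.1, by exact_mod_cast hj.2⟩ hij

/-- For a positive non-integer real `r`, the sequence `a k = [k^r]` satisfies
Condition (*). -/
theorem rpow_floor_satisfies_condition_star
    (r : ℝ) (hr : 0 < r) (hr' : ∀ z : ℤ, r ≠ (z : ℝ))
    (a : ℕ → ℤ) (ha : ∀ k, a k = ⌊(k : ℝ) ^ r⌋) :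
    ∀ L : ℝ, 0 < L →
      Tendsto (fun N : ℕ => (starCountZ a L N : ℝ) / (N : ℝ) ^ 2) atTop (𝓝 0) :=
  rpow_floor_satisfies_condition_star_general r hr a ha
end
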